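/- (End-to-end correctness of the S2PVC protocol.) Let G be a commutative group and g an element of G of finite order q. With the MI-FEIP setup of n parties with input lengths η : Fin n → ℕ, master secrets a : Fin 2 → ℤ, W_i (η_i × 2 integer matrices), u_i : Fin η_i → ℤ, per-party randomness r_i : ℤ, party inputs x_i : Fin η_i → ℤ and server weight partition y_i : Fin η_i → ℤ, let the ciphertexts be t_{i,ℓ} = g^{a_ℓ · r_i} and c_{i,j} = g^{x_{i,j}} · g^{u_{i,j}} · g^{(∑_ℓ W_{i,j,ℓ} · a_ℓ) · r_i}, and the functional key components d_{i,ℓ} = ∑_j y_{i,j} · W_{i,j,ℓ} and z = ∑_i ∑_j y_{i,j} · u_{i,j}. Suppose f_b is a natural number with 2·f_b < q and |∑_i ∑_j y_{i,j} · x_{i,j}| ≤ f_b. Then ∑_i ∑_j y_{i,j} · x_{i,j} is the unique integer f with |f| ≤ f_b satisfying g^f = (∏_i (∏_j c_{i,j}^{y_{i,j}}) · (∏_ℓ t_{i,ℓ}^{d_{i,ℓ}})^{−1}) · g^{−z}. Hence the server recovers exactly the inner product of the vertically concatenated client data (x_1 ‖ ... ‖ x_n) with its weight vector y = (y_1 ‖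 ... ‖ y_n). -/

import Mathlib

/-!
Every party's mask `g ^ ((∑ ℓ, W i j ℓ * a ℓ) * r i)` is cancelled by the functional key, because
both sides carry the exponent `∑ j ∑ ℓ, y i j * W i j ℓ * a ℓ * r i`; the one-time pads `u` are
then cancelled by `g ^ (-∑ i ∑ j, y i j * u i j)`, so the decryption equals
`g ^ ∑ i ∑ j, y i j * x i j`. Two exponents of absolute value at most `f_b` that agree modulo
`orderOf g > 2 * f_b` are equal, so this is the only solution of the bounded discrete logarithm.
-/

open Finset

theorem Finset.prod_zpow_eq_zpow_sum {G ι : Type*} [CommGroup G] (s : Finset ι) (f : ι → ℤ)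
    (g : G) : ∏ i ∈ s, g ^ f i = g ^ ∑ i ∈ s, f i := by
  induction s using Finset.cons_induction with
  | empty => simp
  | cons i s hi ih => rw [prod_cons, sum_cons, ih, zpow_add]

theorem eq_of_zpow_eq_of_abs_le {G : Type*} [Group G] {g : G} {B : ℕ} (hB : 2 * B < orderOf g)
    {f f' : ℤ} (hf : |f| ≤ B) (hf' : |f'| ≤ B) (h : g ^ f = g ^ f') : f = f' := by
  have hdvd : (orderOf g : ℤ) ∣ f' - f := (zpow_eq_zpow_iff_modEq.mp h).dvd
  have hlt : |f' - f| < orderOf g :=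
    calc |f' - f| ≤ |f'| + |f| := abs_sub f' f
      _ < orderOf g := by omega
  linarith [Int.eq_zero_of_abs_lt_dvd hdvd hlt]

section Decryption

variable {G ι κ : Type*} [CommGroup G] [Fintype ι] [Fintype κ]

theorem mife_party_decrypt (g : G) (a : κ → ℤ) (W : ι → κ → ℤ) (u x y : ι → ℤ) (r : ℤ) :
    (∏ j, (g ^ x j * g ^ u j * g ^ ((∑ ℓ, W j ℓ * a ℓ) * r)) ^ y j) *
        (∏ ℓ, (g ^ (a ℓ * r)) ^ (∑ j, y j * W j ℓ))⁻¹ =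
      g ^ ∑ j, y j * (x j + u j) := by
  have hmask : ∑ ℓ, a ℓ * r * ∑ j, y j * W j ℓ = ∑ j, y j * ((∑ ℓ, W j ℓ * a ℓ) * r) := by
    simp only [mul_sum, sum_mul]
    rw [sum_comm]
    exact sum_congr rfl fun j _ => sum_congr rfl fun ℓ _ => by ring
  simp only [← zpow_add, ← zpow_mul, prod_zpow_eq_zpow_sum, ← zpow_neg]
  congr 1
  rw [hmask, ← sum_neg_distrib, ← sum_add_distrib]
  exact sum_congr rfl fun j _ => by ring

end Decryption

theorem s2pvc_decrypt {G : Type*} [CommGroup G] (g : G) (n : ℕ) (η : Fin n → ℕ) (a : Fin 2 → ℤ)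
    (W : (i : Fin n) → Fin (η i) → Fin 2 → ℤ) (u x y : (i : Fin n) → Fin (η i) → ℤ)
    (r : Fin n → ℤ) :
    (∏ i, (∏ j, (g ^ x i j * g ^ u i j *
            g ^ ((∑ ℓ, W i j ℓ * a ℓ) * r i)) ^ y i j) *
          (∏ ℓ, (g ^ (a ℓ * r i)) ^ (∑ j, y i j * W i j ℓ))⁻¹) *
        g ^ (-(∑ i, ∑ j, y i j * u i j)) =
      g ^ ∑ i, ∑ j, y i j * x i j := by
  simp only [mife_party_decrypt]
  rw [prod_zpow_eq_zpow_sum, ← zpow_add]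
  congr 1
  simp only [mul_add, sum_add_distrib]
  ring

/-- End-to-end correctness of the S2PVC protocol: with the MI-FEIP ciphertexts
of the parties' sub-vectors and the functional key for the server's weight
partition, the multi-input inner product `∑ i ∑ j y_{i,j}·x_{i,j}` is the
unique integer `f` with `|f| ≤ f_b` matching the decryption expression,
provided `2·f_b` is less than the order of `g` and the inner product is
bounded by `f_b`. -/
theorem s2pvc_correct
    {G : Type*} [CommGroup G] (g : G) (q : ℕ) (hq : orderOf g = q)
    (n : ℕ) (η : Fin n → ℕ)
    (a : Fin 2 → ℤ)
    (W : (i : Fin n) → Fin (η i) → Fin 2 → ℤ)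
    (u x y : (i : Fin n) → Fin (η i) → ℤ)
    (r : Fin n → ℤ)
    (f_b : ℕ) (hfb : 2 * f_b < q)
    (hbound : |∑ i, ∑ j, y i j * x i j| ≤ (f_b : ℤ)) :
    ∀ f : ℤ,
      (|f| ≤ (f_b : ℤ) ∧
        g ^ f =
          (∏ i, (∏ j, (g ^ x i j * g ^ u i j *
                  g ^ ((∑ ℓ, W i j ℓ * a ℓ) * r i)) ^ y i j) *
                (∏ ℓ, (g ^ (a ℓ * r i)) ^ (∑ j, y i j * W i j ℓ))⁻¹) *
              g ^ (-(∑ i, ∑ j, y i j * u i j))) ↔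
      f = ∑ i, ∑ j, y i j * x i j := by
  intro f
  rw [s2pvc_decrypt]
  constructor
  · rintro ⟨hf, hdecrypt⟩
    exact eq_of_zpow_eq_of_abs_le (hq ▸ hfb) hf hbound hdecrypt
  · rintro rfl
    exact ⟨hbound, rfl⟩
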